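/- arXiv:2205.09734 — 2 statements merged into one kernel-verified Lean document; each statement's English description precedes it below -/
import Mathlib

section
/- Equidistributed ensembles contain many distinct high-complexity unitaries: Let 𝒢 be a gate set in U(d), let ν be a probability measure on U(d) that is (α,β)-equidistributed at scale ε with 2·β·ε ≤ 2, and assume the natural number r satisfies r + 2 < (d²−1)·log(A/ε)/log|𝒢| where A := c_o/(4β(c^o)²). Let N_pack(Y, ε) denote the supremum of cardinalities of finite subsets of Y whose elements are pairwise at D-distance ≥ ε, and let 𝒞^{>r}_ε(ν) := {U ∈ supp(ν) : no W ∈ 𝒢^{≤r} has D(U,W) ≤ ε} (the support points of complexity larger than r). Then 2·N_pack(𝒞^{>r}_ε(ν), ε) ≥ N_pack(supp(ν), ε), and N_pack(supp(ν), ε) ≥ 1/Vol(2βε). -/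
open MeasureTheory
open scoped ENNReal Matrix InnerProductSpace

namespace Paper

noncomputable section

instance matMS (d : ℕ) : MeasurableSpace (Matrix (Fin d) (Fin d) ℂ) := borel _
instance matBS (d : ℕ) : BorelSpace (Matrix (Fin d) (Fin d) ℂ) := ⟨rfl⟩

/-- The unitary group `U(d)`. -/
abbrev UG (d : ℕ) := Matrix.unitaryGroup (Fin d) ℂ

/-- ℓ²→ℓ² operator norm (spectral norm) of a matrix. -/
def opNorm {d : ℕ} (A : Matrix (Fin d) (Fin d) ℂ) : ℝ :=
  ‖Matrix.toEuclideanCLM (𝕜 := ℂ) A‖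

/-- Phase-invariant distance on unitary channels. -/
def D {d : ℕ} (U V : UG d) : ℝ :=
  ⨅ z : {z : ℂ // ‖z‖ = 1},
    opNorm ((U : Matrix (Fin d) (Fin d) ℂ) - z.val • (V : Matrix (Fin d) (Fin d) ℂ))

/-- Closed ball of radius `r` around `V` in `U(d)` for the distance `D`. -/
def ball {d : ℕ} (V : UG d) (r : ℝ) : Set (UG d) := {U | D U V ≤ r}

/-- Haar volume of a ball of radius `r`. -/
def Vol {d : ℕ} (μ : Measure (UG d)) (r : ℝ) : ℝ≥0∞ := μ (ball 1 r)

/-- `(α,β)`-equidistribution of `ν` at scale `ε` (relative to the Haar measure `μ`). -/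
def Equidistributed {d : ℕ} (μ ν : Measure (UG d)) (α β ε : ℝ) : Prop :=
  ∀ (V : UG d) (r : ℝ), ε ≤ r →
    Vol μ (α * r) ≤ ν (ball V r) ∧ ν (ball V r) ≤ Vol μ (β * r)

/-- Products of at most `r` elements of the gate set `𝒢`. -/
def wordsLe {d : ℕ} (𝒢 : Finset (UG d)) (r : ℕ) : Set (UG d) :=
  {W | ∃ l : List (UG d), l.length ≤ r ∧ (∀ g ∈ l, g ∈ 𝒢) ∧ l.prod = W}

/-- Convolution of two measures on a monoid: pushforward of the product measure under
multiplication. -/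
def mconv {G : Type*} [Monoid G] [MeasurableSpace G] (ν ϑ : Measure G) : Measure G :=
  (ν.prod ϑ).map (fun p => p.1 * p.2)

/-- `t`-fold convolution power of a measure. -/
def convPow {G : Type*} [Monoid G] [MeasurableSpace G] (ν : Measure G) : ℕ → Measure G
  | 0 => Measure.dirac 1
  | n + 1 => mconv (convPow ν n) ν

/-- The random walk `U_t = V_t ⋯ V_1`. -/
def walk {d : ℕ} {Ω : Type*} (V : ℕ → Ω → UG d) (t : ℕ) (ω : Ω) : UG d :=
  ((List.range t).map (fun i => V (t - i) ω)).prod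

/-- Euclidean space `ℂ^d`. -/
abbrev EV (d : ℕ) := EuclideanSpace ℂ (Fin d)

instance evMS (d : ℕ) : MeasurableSpace (EV d) := borel _
instance evBS (d : ℕ) : BorelSpace (EV d) := ⟨rfl⟩

/-- Distance on pure states. -/
def dS {d : ℕ} (ψ φ : EV d) : ℝ := Real.sqrt (1 - ‖⟪ψ, φ⟫_ℂ‖ ^ 2)

/-- Ball of radius `r` around the state `φ`, inside the set of unit vectors. -/
def ballS {d : ℕ} (φ : EV d) (r : ℝ) : Set (EV d) := {ψ | ‖ψ‖ = 1 ∧ dS ψ φ ≤ r}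

/-- Action of a unitary matrix on a vector. -/
def act {d : ℕ} (U : UG d) (ψ : EV d) : EV d :=
  Matrix.toEuclideanLin (U : Matrix (Fin d) (Fin d) ℂ) ψ

/-- Topological support of a measure. -/
def msupport {X : Type*} [TopologicalSpace X] [MeasurableSpace X] (ν : Measure X) : Set X :=
  {x | ∀ U : Set X, IsOpen U → x ∈ U → ν U ≠ 0}

/-- Packing number (as an extended nonnegative real): supremum of cardinalities of finite
subsets of `Y` whose elements are pairwise at `dist`-distance at least `ε`. -/
def Npack {X : Type*} (dist : X → X → ℝ) (Y : Set X) (ε : ℝ) : ℝ≥0∞ :=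
  ⨆ (S : Finset X) (_ : ↑S ⊆ Y ∧ (S : Set X).Pairwise fun x y => ε ≤ dist x y),
    (S.card : ℝ≥0∞)

end
end Paper

/-!
Take an `ε`-packing `S` of `supp ν` of maximal size. The balls of radius `ε/3` around its points
are disjoint and each has Haar volume at least `(c_o ε/3)^(d²-1)`, so packings are bounded and
`|S|` is the packing number `N`. By maximality the `ε`-balls around `S` cover `supp ν`, and
equidistribution gives `1 ≤ N · Vol(βε)`, hence the first inequality. The `ε/3`-balls around the
points of `S` within `ε` of a fixed word lie in a ball of radius `4ε/3`, so each of the fewer than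
`|𝒢|^(r+1)` words of length `≤ r` is `ε`-close to at most `(4c^o/c_o)^(d²-1)` points of `S`.
The bound on `r` makes twice this count smaller than `N`, so more than half of `S` consists of
points of complexity `> r`, and they form a packing of `𝒞^{>r}_ε(ν)`.
-/

open scoped Matrix.Norms.L2Operator Pointwise

namespace Paper

section Packing

variable {X : Type*}

def IsPacking (dist : X → X → ℝ) (Y : Set X) (ε : ℝ) (S : Finset X) : Prop :=
  ↑S ⊆ Y ∧ (S : Set X).Pairwise fun x y => ε ≤ dist x y

variable {dist : X → X → ℝ} {Y : Set X} {ε : ℝ}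

lemma IsPacking.card_le_Npack {S : Finset X} (hS : IsPacking dist Y ε S) :
    (S.card : ℝ≥0∞) ≤ Npack dist Y ε :=
  le_iSup₂ (f := fun S (_ : IsPacking dist Y ε S) => (S.card : ℝ≥0∞)) S hS

lemma IsPacking.mono {S T : Finset X} {Z : Set X} (hS : IsPacking dist Y ε S) (hTS : T ⊆ S)
    (hTZ : ↑T ⊆ Z) : IsPacking dist Z ε T :=
  ⟨hTZ, hS.2.mono (Finset.coe_subset.2 hTS)⟩

lemma exists_isPacking_card_eq_Npack (hbdd : ∃ K, ∀ S, IsPacking dist Y ε S → S.card ≤ K) :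
    ∃ S, IsPacking dist Y ε S ∧ (S.card : ℝ≥0∞) = Npack dist Y ε := by
  obtain ⟨K, hK⟩ := hbdd
  set P : Set ℕ := {n | ∃ S, IsPacking dist Y ε S ∧ S.card = n}
  have hP : BddAbove P := ⟨K, by rintro _ ⟨S, hS, rfl⟩; exact hK S hS⟩
  have hempty : IsPacking dist Y ε ∅ := ⟨by simp, by simp⟩
  obtain ⟨S, hS, hcard⟩ : sSup P ∈ P := Nat.sSup_mem ⟨0, ∅, hempty, rfl⟩ hP
  refine ⟨S, hS, le_antisymm hS.card_le_Npack (iSup₂_le fun T hT => ?_)⟩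
  rw [hcard]
  exact_mod_cast le_csSup hP ⟨T, hT, rfl⟩

lemma IsPacking.exists_dist_lt_of_card_eq_Npack (hsymm : ∀ x y, dist x y = dist y x)
    (hself : ∀ x, dist x x < ε) {S : Finset X} (hS : IsPacking dist Y ε S)
    (hmax : (S.card : ℝ≥0∞) = Npack dist Y ε) {y : X} (hy : y ∈ Y) :
    ∃ x ∈ S, dist y x < ε := by
  classical
  by_contra! hfar
  have hyS : y ∉ S := fun h => (hself y).not_ge (hfar y h)
  have hins : IsPacking dist Y ε (insert y S) := by
    rw [IsPacking, Finset.coe_insert]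
    exact ⟨Set.insert_subset hy hS.1,
      hS.2.insert fun x hx _ => ⟨hfar x hx, hsymm x y ▸ hfar x hx⟩⟩
  have := hins.card_le_Npack
  rw [Finset.card_insert_of_notMem hyS, ← hmax, Nat.cast_le] at this
  omega

end Packing

lemma msupport_eq_support {X : Type*} [TopologicalSpace X] [MeasurableSpace X] (ν : Measure X) :
    msupport ν = ν.support := by
  simp only [Measure.support_eq_forall_isOpen, msupport, pos_iff_ne_zero]
  exact Set.ext fun x => forall_congr' fun U => forall_comm

lemma measure_msupport {X : Type*} [TopologicalSpace X] [MeasurableSpace X]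
    [HereditarilyLindelofSpace X] (ν : Measure X) [IsProbabilityMeasure ν] :
    ν (msupport ν) = 1 := by
  rw [msupport_eq_support, measure_congr (ae_eq_univ.2 Measure.measure_compl_support),
    measure_univ]

lemma list_prod_mem_pow {G : Type*} [Monoid G] [DecidableEq G] {s : Finset G} {l : List G}
    (hl : ∀ g ∈ l, g ∈ s) : l.prod ∈ s ^ l.length := by
  induction l with
  | nil => simp
  | cons a l ih =>
    rw [List.prod_cons, List.length_cons, pow_succ']
    exact Finset.mul_mem_mul (hl a List.mem_cons_self)
      (ih fun g hg => hl g (List.mem_cons_of_mem a hg))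

lemma natCast_mul_ofReal (k : ℕ) (a : ℝ) :
    (k : ℝ≥0∞) * ENNReal.ofReal a = ENNReal.ofReal (k * a) := by
  rw [ENNReal.ofReal_mul (Nat.cast_nonneg k), ENNReal.ofReal_natCast]

lemma pow_lt_pow_of_lt_mul_log_div_log {g x : ℝ} {k n : ℕ} (hg : 1 < g) (hx : 0 < x)
    (h : (k : ℝ) < n * Real.log x / Real.log g) : g ^ k < x ^ n := by
  rw [← Real.log_lt_log_iff (by positivity) (by positivity), Real.log_pow, Real.log_pow]
  exact (lt_div_iff₀ (Real.log_pos hg)).1 h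

section Distance

abbrev Mat (d : ℕ) := Matrix (Fin d) (Fin d) ℂ

variable {d : ℕ}

instance : Nonempty {z : ℂ // ‖z‖ = 1} := ⟨⟨1, norm_one⟩⟩

lemma opNorm_eq_norm (A : Mat d) : opNorm A = ‖A‖ := rfl

lemma D_le (U V : UG d) (z : {z : ℂ // ‖z‖ = 1}) :
    D U V ≤ ‖(U : Mat d) - z.1 • (V : Mat d)‖ :=
  ciInf_le ⟨0, by rintro _ ⟨w, rfl⟩; exact norm_nonneg _⟩ z

lemma le_D {U V : UG d} {a : ℝ}
    (h : ∀ z : {z : ℂ // ‖z‖ = 1}, a ≤ ‖(U : Mat d) - z.1 • (V : Mat d)‖) :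
    a ≤ D U V :=
  le_ciInf h

lemma D_self (U : UG d) : D U U = 0 :=
  le_antisymm (by simpa using D_le U U ⟨1, norm_one⟩) (le_D fun _ => norm_nonneg _)

lemma D_comm (U V : UG d) : D U V = D V U := by
  suffices ∀ U V : UG d, D U V ≤ D V U from le_antisymm (this U V) (this V U)
  refine fun U V => le_D fun z => ?_
  have hz : ‖(starRingEnd ℂ) z.1‖ = 1 := by rw [RCLike.norm_conj, z.2]
  have hzz : (starRingEnd ℂ) z.1 * z.1 = 1 := by
    rw [RCLike.conj_mul, z.2]; norm_num
  calc D U V ≤ ‖(U : Mat d) - (starRingEnd ℂ) z.1 • (V : Mat d)‖ :=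
        D_le U V ⟨_, hz⟩
    _ = ‖(-(starRingEnd ℂ) z.1) • ((V : Mat d) - z.1 • (U : Mat d))‖ := by
        rw [neg_smul, smul_sub, smul_smul, hzz, one_smul, neg_sub]
    _ = _ := by rw [norm_smul, norm_neg, hz, one_mul]

lemma D_triangle (U V W : UG d) : D U W ≤ D U V + D V W := by
  refine le_ciInf_add_ciInf fun z w => ?_
  have hzw : ‖z.1 * w.1‖ = 1 := by rw [norm_mul, z.2, w.2, one_mul]
  calc D U W ≤ ‖(U : Mat d) - (z.1 * w.1) • (W : Mat d)‖ := D_le U W ⟨_, hzw⟩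
    _ ≤ ‖(U : Mat d) - z.1 • (V : Mat d)‖ +
        ‖z.1 • ((V : Mat d) - w.1 • (W : Mat d))‖ := by
      rw [smul_sub, smul_smul]; exact norm_sub_le_norm_sub_add_norm_sub _ _ _
    _ = _ := by rw [norm_smul, z.2, one_mul]; rfl

lemma D_mul_left (g U V : UG d) : D (g * U) (g * V) = D U V := by
  unfold D
  congr 1
  funext z
  change opNorm ((g : Mat d) * (U : Mat d) - z.1 • ((g : Mat d) * (V : Mat d))) = _
  rw [← Matrix.mul_smul, ← Matrix.mul_sub, opNorm_eq_norm, CStarRing.norm_coe_unitary_mul]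
  rfl

lemma lipschitzWith_D_left (V : UG d) : LipschitzWith 1 fun U : UG d => D U V := by
  refine LipschitzWith.of_le_add fun U U' => ?_
  rw [Subtype.dist_eq, dist_eq_norm]
  have : D U V - ‖(U : Mat d) - U'‖ ≤ D U' V := le_D fun z => by
    linarith [D_le U V z, norm_sub_le_norm_sub_add_norm_sub (U : Mat d) U' (z.1 • V)]
  linarith

lemma isClosed_ball (V : UG d) (r : ℝ) : IsClosed (ball V r) :=
  isClosed_Iic.preimage (lipschitzWith_D_left V).continuous

end Distance

lemma Vol_mono {d : ℕ} (μ : Measure (UG d)) {ρ ρ' : ℝ} (h : ρ ≤ ρ') : Vol μ ρ ≤ Vol μ ρ' :=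
  measure_mono fun U (hU : D U 1 ≤ ρ) => show D U 1 ≤ ρ' from hU.trans h

lemma inv_Vol_le_card {d : ℕ} (μ : Measure (UG d)) [IsFiniteMeasure μ] {ρ ρ' : ℝ} (h : ρ ≤ ρ')
    {S : Finset (UG d)} (hS : 1 ≤ S.card * Vol μ ρ) : (Vol μ ρ')⁻¹ ≤ S.card := by
  rw [ENNReal.inv_le_iff_le_mul (a := Vol μ ρ') (fun h => absurd h (ENNReal.natCast_ne_top _))
    (fun h => absurd h (measure_ne_top μ _)), mul_comm]
  exact hS.trans (by gcongr; exact Vol_mono μ h)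

section Haar

variable {d : ℕ} (μ : Measure (UG d)) [μ.IsMulLeftInvariant]

lemma measure_ball (V : UG d) (r : ℝ) : μ (ball V r) = Vol μ r := by
  have : ball V r = (fun U => V⁻¹ * U) ⁻¹' ball 1 r := by
    ext U
    simp only [ball, Set.mem_preimage, Set.mem_ofPred_eq, ← D_mul_left V⁻¹ U V, inv_mul_cancel]
  rw [this, measure_preimage_mul, Vol]

lemma card_mul_Vol_le {ρ ε : ℝ} (hρ : 2 * ρ < ε) {T : Finset (UG d)}
    (hT : (T : Set (UG d)).Pairwise fun x y => ε ≤ D x y) {Z : Set (UG d)}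
    (hTZ : ∀ x ∈ T, ball x ρ ⊆ Z) : T.card * Vol μ ρ ≤ μ Z := by
  have hdisj : (T : Set (UG d)).PairwiseDisjoint fun x => ball x ρ := by
    refine fun x hx y hy hxy => Set.disjoint_left.2 fun u hux huy => ?_
    have := D_triangle x u y
    rw [D_comm x u] at this
    linarith [hT hx hy hxy, show D u x ≤ ρ from hux, show D u y ≤ ρ from huy]
  calc T.card * Vol μ ρ = ∑ x ∈ T, μ (ball x ρ) := by simp [measure_ball]
    _ = μ (⋃ x ∈ T, ball x ρ) :=
      (measure_biUnion_finset hdisj fun x _ => (isClosed_ball x ρ).measurableSet).symm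
    _ ≤ μ Z := measure_mono (Set.iUnion₂_subset hTZ)

lemma exists_card_le_of_isPacking [IsProbabilityMeasure μ] {ρ ε : ℝ} (hρ : 2 * ρ < ε)
    (hV : Vol μ ρ ≠ 0) (Y : Set (UG d)) :
    ∃ K : ℕ, ∀ T : Finset (UG d), IsPacking D Y ε T → T.card ≤ K := by
  obtain ⟨K, hK⟩ := ENNReal.exists_nat_mul_gt hV ENNReal.one_ne_top
  refine ⟨K, fun T hT => ?_⟩
  have hT1 : T.card * Vol μ ρ ≤ 1 :=
    (card_mul_Vol_le μ hρ hT.2 fun _ _ => Set.subset_univ _).trans prob_le_one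
  by_contra! hlt
  exact (hK.trans_le ((mul_le_mul_left (Nat.cast_le.2 hlt.le) _).trans hT1)).false

end Haar

lemma exists_finset_wordsLe_subset {d : ℕ} (𝒢 : Finset (UG d)) (h𝒢 : 2 ≤ 𝒢.card) (r : ℕ) :
    ∃ F : Finset (UG d), wordsLe 𝒢 r ⊆ F ∧ F.card < 𝒢.card ^ (r + 1) := by
  classical
  refine ⟨(Finset.range (r + 1)).biUnion (𝒢 ^ ·), ?_, ?_⟩
  · rintro _ ⟨l, hlen, hl, rfl⟩
    exact Finset.mem_biUnion.2 ⟨l.length, Finset.mem_range.2 (by omega), list_prod_mem_pow hl⟩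
  · calc _ ≤ ∑ k ∈ Finset.range (r + 1), (𝒢 ^ k).card := Finset.card_biUnion_le
      _ ≤ ∑ k ∈ Finset.range (r + 1), 𝒢.card ^ k :=
        Finset.sum_le_sum fun _ _ => Finset.card_pow_le
      _ < 𝒢.card ^ (r + 1) := Nat.geomSum_lt h𝒢 fun _ hk => Finset.mem_range.1 hk

def VolBounds {d : ℕ} (μ : Measure (UG d)) (c_o cO : ℝ) : Prop :=
  ∀ r : ℝ, 0 < r → r ≤ 2 →
    ENNReal.ofReal ((c_o * r) ^ (d ^ 2 - 1)) ≤ Vol μ r ∧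
      Vol μ r ≤ ENNReal.ofReal ((cO * r) ^ (d ^ 2 - 1))

lemma one_le_card_mul_Vol {d : ℕ} {μ ν : Measure (UG d)} [IsProbabilityMeasure ν] {α β ε : ℝ}
    (hequi : Equidistributed μ ν α β ε) {S : Finset (UG d)}
    (hcover : msupport ν ⊆ ⋃ x ∈ S, ball x ε) : 1 ≤ S.card * Vol μ (β * ε) :=
  calc 1 = ν (msupport ν) := (measure_msupport ν).symm
    _ ≤ ν (⋃ x ∈ S, ball x ε) := measure_mono hcover
    _ ≤ ∑ x ∈ S, ν (ball x ε) := measure_biUnion_finset_le S _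
    _ ≤ ∑ x ∈ S, Vol μ (β * ε) := Finset.sum_le_sum fun x _ => (hequi x ε le_rfl).2
    _ = S.card * Vol μ (β * ε) := by rw [Finset.sum_const, nsmul_eq_mul]

section VolBounds

variable {d : ℕ} {μ : Measure (UG d)} [μ.IsMulLeftInvariant] {c_o cO : ℝ}

lemma card_le_of_forall_D_le (hco : 0 < c_o) (hcO : 0 < cO) (hvol : VolBounds μ c_o cO)
    {ε : ℝ} (hε : 0 < ε) (hε1 : ε ≤ 3 / 2) {T : Finset (UG d)}
    (hT : (T : Set (UG d)).Pairwise fun x y => ε ≤ D x y)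
    {W : UG d} (hTW : ∀ x ∈ T, D x W ≤ ε) :
    (T.card : ℝ) ≤ (4 * cO / c_o) ^ (d ^ 2 - 1) := by
  have hsub : ∀ x ∈ T, ball x (ε / 3) ⊆ ball W (4 * ε / 3) := fun x hx u hu => by
    change D u W ≤ 4 * ε / 3
    linarith [D_triangle u x W, show D u x ≤ ε / 3 from hu, hTW x hx]
  have hle : ENNReal.ofReal (T.card * (c_o * (ε / 3)) ^ (d ^ 2 - 1)) ≤
      ENNReal.ofReal ((cO * (4 * ε / 3)) ^ (d ^ 2 - 1)) := by
    rw [← natCast_mul_ofReal]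
    calc _ ≤ T.card * Vol μ (ε / 3) := by gcongr; exact (hvol _ (by positivity) (by linarith)).1
      _ ≤ μ (ball W (4 * ε / 3)) := card_mul_Vol_le μ (by linarith) hT hsub
      _ = Vol μ (4 * ε / 3) := measure_ball μ W _
      _ ≤ _ := (hvol _ (by positivity) (by linarith)).2
  rw [ENNReal.ofReal_le_ofReal_iff (by positivity)] at hle
  refine le_of_mul_le_mul_right ?_ (by positivity : 0 < (c_o * (ε / 3)) ^ (d ^ 2 - 1))
  calc _ ≤ (cO * (4 * ε / 3)) ^ (d ^ 2 - 1) := hle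
    _ = _ := by rw [← mul_pow]; congr 1; field_simp

open Classical in
lemma card_filter_exists_wordsLe_le (hco : 0 < c_o) (hcO : 0 < cO) (hvol : VolBounds μ c_o cO)
    {ε : ℝ} (hε : 0 < ε) (hε1 : ε ≤ 3 / 2) {𝒢 : Finset (UG d)} (h𝒢 : 2 ≤ 𝒢.card) (r : ℕ)
    {S : Finset (UG d)} (hS : (S : Set (UG d)).Pairwise fun x y => ε ≤ D x y) :
    ((S.filter fun x => ∃ W ∈ wordsLe 𝒢 r, D x W ≤ ε).card : ℝ) ≤
      𝒢.card ^ (r + 1) * (4 * cO / c_o) ^ (d ^ 2 - 1) := by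
  obtain ⟨F, hwF, hF⟩ := exists_finset_wordsLe_subset 𝒢 h𝒢 r
  have hsub : S.filter (fun x => ∃ W ∈ wordsLe 𝒢 r, D x W ≤ ε) ⊆
      F.biUnion fun W => S.filter (D · W ≤ ε) := fun x hx => by
    obtain ⟨hxS, W, hW, hxW⟩ := Finset.mem_filter.1 hx
    exact Finset.mem_biUnion.2 ⟨W, hwF hW, Finset.mem_filter.2 ⟨hxS, hxW⟩⟩
  calc _ ≤ ((F.biUnion fun W => S.filter (D · W ≤ ε)).card : ℝ) := by
        exact_mod_cast Finset.card_le_card hsub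
    _ ≤ ∑ W ∈ F, ((S.filter (D · W ≤ ε)).card : ℝ) := by
        exact_mod_cast Finset.card_biUnion_le
    _ ≤ ∑ W ∈ F, (4 * cO / c_o) ^ (d ^ 2 - 1) := Finset.sum_le_sum fun W _ =>
        card_le_of_forall_D_le hco hcO hvol hε hε1
          (hS.mono (Finset.coe_subset.2 (Finset.filter_subset _ _)))
          fun x hx => (Finset.mem_filter.1 hx).2
    _ ≤ _ := by
        rw [Finset.sum_const, nsmul_eq_mul]
        gcongr
        exact_mod_cast hF.le

open Classical in
lemma two_mul_card_filter_exists_wordsLe_lt (hco : 0 < c_o) (hcO : 0 < cO)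
    (hvol : VolBounds μ c_o cO) {β ε : ℝ} (hβ : 1 ≤ β) (hε : 0 < ε) (hβε : β * ε ≤ 1)
    {𝒢 : Finset (UG d)} (h𝒢 : 2 ≤ 𝒢.card) {r : ℕ}
    (hr : (r : ℝ) + 2 <
      ((d ^ 2 - 1 : ℕ) : ℝ) * Real.log ((c_o / (4 * β * cO ^ 2)) / ε) / Real.log (𝒢.card))
    {S : Finset (UG d)} (hS : (S : Set (UG d)).Pairwise fun x y => ε ≤ D x y)
    (hN : 1 ≤ S.card * Vol μ (β * ε)) :
    2 * ((S.filter fun x => ∃ W ∈ wordsLe 𝒢 r, D x W ≤ ε).card : ℝ) < S.card := by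
  have hg : (2 : ℝ) ≤ 𝒢.card := by exact_mod_cast h𝒢
  set g : ℝ := (𝒢.card : ℝ)
  set M : ℝ := (4 * cO / c_o) ^ (d ^ 2 - 1)
  have hε1 : ε ≤ 1 := by nlinarith
  have hNreal : 1 ≤ S.card * (cO * (β * ε)) ^ (d ^ 2 - 1) := by
    rw [← ENNReal.one_le_ofReal, ← natCast_mul_ofReal]
    exact hN.trans (by gcongr; exact (hvol _ (by positivity) (by linarith)).2)
  have hpow : g ^ (r + 2) < (c_o / (4 * β * cO ^ 2) / ε) ^ (d ^ 2 - 1) :=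
    pow_lt_pow_of_lt_mul_log_div_log (by linarith) (by positivity) (by push_cast; exact hr)
  -- `A := c_o / (4β(c^o)²)` is chosen so that `(A/ε) · (4c^o/c_o) = (c^o βε)⁻¹`.
  have hM : (c_o / (4 * β * cO ^ 2) / ε) ^ (d ^ 2 - 1) * M =
      ((cO * (β * ε)) ^ (d ^ 2 - 1))⁻¹ := by
    rw [← mul_pow, ← inv_pow]
    congr 1
    field_simp
  calc 2 * ((S.filter fun x => ∃ W ∈ wordsLe 𝒢 r, D x W ≤ ε).card : ℝ)
      ≤ 2 * (g ^ (r + 1) * M) := by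
        gcongr
        exact card_filter_exists_wordsLe_le hco hcO hvol hε (by linarith) h𝒢 r hS
    _ ≤ g ^ (r + 1) * g * M := by rw [← mul_assoc, mul_comm 2]; gcongr
    _ < (c_o / (4 * β * cO ^ 2) / ε) ^ (d ^ 2 - 1) * M := by rw [← pow_succ]; gcongr
    _ = ((cO * (β * ε)) ^ (d ^ 2 - 1))⁻¹ := hM
    _ ≤ S.card := (inv_le_iff_one_le_mul₀ (by positivity)).2 hNreal

end VolBounds

theorem stmt14_general {d : ℕ} (μ ν : Measure (UG d))
    [IsProbabilityMeasure μ] [μ.IsMulLeftInvariant] [IsProbabilityMeasure ν]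
    (c_o cO : ℝ) (hco : 0 < c_o) (hcO : 1 ≤ cO)
    (hvol : ∀ r : ℝ, 0 < r → r ≤ 2 →
      ENNReal.ofReal ((c_o * r) ^ (d ^ 2 - 1)) ≤ Vol μ r ∧
        Vol μ r ≤ ENNReal.ofReal ((cO * r) ^ (d ^ 2 - 1)))
    (𝒢 : Finset (UG d)) (h𝒢 : 2 ≤ 𝒢.card)
    {α β ε : ℝ} (hβ : 1 ≤ β) (hε : 0 < ε)
    (hβε : 2 * β * ε ≤ 2)
    (hequi : Equidistributed μ ν α β ε)
    (r : ℕ)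
    (hr : (r : ℝ) + 2 <
      ((d ^ 2 - 1 : ℕ) : ℝ) * Real.log ((c_o / (4 * β * cO ^ 2)) / ε) / Real.log (𝒢.card)) :
    (Vol μ (2 * β * ε))⁻¹ ≤ Npack D (msupport ν) ε ∧
      Npack D (msupport ν) ε ≤
        2 * Npack D {U : UG d | U ∈ msupport ν ∧ ∀ W ∈ wordsLe 𝒢 r, ¬ D U W ≤ ε} ε := by
  classical
  have hVol : Vol μ (ε / 3) ≠ 0 :=
    ((ENNReal.ofReal_pos.2 (by positivity)).trans_le
      (hvol _ (by positivity) (by nlinarith)).1).ne'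
  obtain ⟨S, hS, hSN⟩ := exists_isPacking_card_eq_Npack
    (exists_card_le_of_isPacking μ (by linarith : 2 * (ε / 3) < ε) hVol (msupport ν))
  have hcover : msupport ν ⊆ ⋃ x ∈ S, ball x ε := fun y hy => by
    obtain ⟨x, hx, hyx⟩ :=
      hS.exists_dist_lt_of_card_eq_Npack D_comm (by simpa [D_self]) hSN hy
    exact Set.mem_biUnion hx hyx.le
  have hN := one_le_card_mul_Vol hequi hcover
  refine ⟨hSN ▸ inv_Vol_le_card μ (by nlinarith) hN, ?_⟩
  have hbad : 2 * (S.filter fun x => ∃ W ∈ wordsLe 𝒢 r, D x W ≤ ε).card < S.card := by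
    exact_mod_cast two_mul_card_filter_exists_wordsLe_lt hco (by linarith) hvol hβ hε
      (by linarith) h𝒢 hr hS.2 hN
  have hgood : IsPacking D {U | U ∈ msupport ν ∧ ∀ W ∈ wordsLe 𝒢 r, ¬ D U W ≤ ε} ε
      (S.filter fun x => ¬ ∃ W ∈ wordsLe 𝒢 r, D x W ≤ ε) :=
    hS.mono (Finset.filter_subset _ _) fun x hx => by
      obtain ⟨hxS, hx⟩ := Finset.mem_filter.1 hx
      exact ⟨hS.1 hxS, fun W hW hxW => hx ⟨W, hW, hxW⟩⟩
  have hsplit :=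
    Finset.card_filter_add_card_filter_not (s := S) fun x => ∃ W ∈ wordsLe 𝒢 r, D x W ≤ ε
  rw [← hSN]
  calc (S.card : ℝ≥0∞)
      ≤ ((2 * (S.filter fun x => ¬ ∃ W ∈ wordsLe 𝒢 r, D x W ≤ ε).card : ℕ) : ℝ≥0∞) :=
        Nat.cast_le.2 (by omega)
    _ ≤ _ := by push_cast; gcongr; exact hgood.card_le_Npack

theorem stmt14 {d : ℕ} (hd : 2 ≤ d) (μ ν : Measure (UG d))
    [IsProbabilityMeasure μ] [μ.IsMulLeftInvariant] [IsProbabilityMeasure ν]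
    (c_o cO : ℝ) (hco : 0 < c_o) (hco1 : c_o ≤ 1) (hcO : 1 ≤ cO)
    (hvol : ∀ r : ℝ, 0 < r → r ≤ 2 →
      ENNReal.ofReal ((c_o * r) ^ (d ^ 2 - 1)) ≤ Vol μ r ∧
        Vol μ r ≤ ENNReal.ofReal ((cO * r) ^ (d ^ 2 - 1)))
    (𝒢 : Finset (UG d)) (h𝒢 : 2 ≤ 𝒢.card)
    {α β ε : ℝ} (hα0 : 0 < α) (hα1 : α ≤ 1) (hβ : 1 ≤ β) (hε : 0 < ε)
    (hβε : 2 * β * ε ≤ 2)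
    (hequi : Equidistributed μ ν α β ε)
    (r : ℕ)
    (hr : (r : ℝ) + 2 <
      ((d ^ 2 - 1 : ℕ) : ℝ) * Real.log ((c_o / (4 * β * cO ^ 2)) / ε) / Real.log (𝒢.card)) :
    (Vol μ (2 * β * ε))⁻¹ ≤ Npack D (msupport ν) ε ∧
      Npack D (msupport ν) ε ≤
        2 * Npack D {U : UG d | U ∈ msupport ν ∧ ∀ W ∈ wordsLe 𝒢 r, ¬ D U W ≤ ε} ε :=
  stmt14_general μ ν c_o cO hco hcO hvol 𝒢 h𝒢 hβ hε hβε hequi r hr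

end Paper
end

section
/- No early recurrence of complexity for random circuits (union bound): Let 𝒢 be a gate set in U(d), let ν be a probability measure on U(d), let τ ≥ 1 be a natural number such that the τ-fold convolution ν^{*τ} is (α,β)-equidistributed at scale ε, and let K ≥ 1 and r be natural numbers. Then, for the i.i.d. random walk U_t = V_t·V_{t−1}⋯V_1 with V_i ∼ ν, ℙ( ∃ k ∈ {0,…,K−1} : ∃ W ∈ 𝒢^{≤r} with D(U_{τ+k}, W) ≤ ε ) ≤ K·|𝒢|^{r+1}·Vol(β·ε). -/
open MeasureTheory
open scoped ENNReal Matrix InnerProductSpace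

/-!
Split `U_{τ+k} = A * U_k` with `A = V_{τ+k} ⋯ V_{k+1}`. The factor `A` has law `ν^{*τ}` and is
independent of `U_k`, and `D (A * B) W = D A (W * B⁻¹)`; so conditioning on `U_k` bounds the
probability that `U_{τ+k}` is `ε`-close to a fixed `W` by `sup_V ν^{*τ}(B(V, ε)) ≤ Vol(β ε)`.
A union bound over the `K` times and the at most `∑_{n ≤ r} |𝒢|^n ≤ |𝒢|^{r+1}` words concludes.
-/

namespace Paper
open ProbabilityTheory Set
open scoped Matrix.Norms.L2Operator

def phases (d : ℕ) : Set (Matrix (Fin d) (Fin d) ℂ) :=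
  range fun z : {z : ℂ // ‖z‖ = 1} => z.val • 1

section Distance
variable {d : ℕ}

theorem D_eq_infDist (U V : UG d) :
    D U V = Metric.infDist ((U * V⁻¹ : UG d) : Matrix (Fin d) (Fin d) ℂ) (phases d) := by
  rw [Metric.infDist_eq_iInf, phases, iInf_range']
  refine iInf_congr fun z => ?_
  rw [dist_eq_norm, ← Unitary.star_eq_inv, Submonoid.coe_mul, Unitary.coe_star,
    ← CStarRing.norm_mul_mem_unitary _ V.prop, sub_mul, smul_mul_assoc, one_mul, mul_assoc,
    Unitary.star_mul_self_of_mem V.prop, mul_one]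
  rfl

theorem D_mul_right (U B W : UG d) : D (U * B) W = D U (W * B⁻¹) := by
  rw [D_eq_infDist, D_eq_infDist, mul_inv_rev, inv_inv, mul_assoc]

theorem continuous_D : Continuous fun p : UG d × UG d => D p.1 p.2 := by
  simp only [D_eq_infDist]
  exact (Metric.continuous_infDist_pt _).comp
    (continuous_subtype_val.comp (continuous_fst.mul continuous_snd.inv))

theorem measurableSet_ball (V : UG d) (r : ℝ) : MeasurableSet (ball V r) :=
  measurableSet_le (continuous_D.comp (continuous_id.prodMk continuous_const)).measurable
    measurable_const

theorem mconv_ball_le {ϑ ρ : Measure (UG d)} [SFinite ϑ] [IsProbabilityMeasure ρ] {ε : ℝ}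
    {c : ℝ≥0∞} (h : ∀ V, ϑ (ball V ε) ≤ c) (W : UG d) : mconv ϑ ρ (ball W ε) ≤ c := by
  have hmul : Measurable fun p : UG d × UG d => p.1 * p.2 := measurable_mul
  rw [mconv, Measure.map_apply hmul (measurableSet_ball W ε),
    Measure.prod_apply_symm (hmul (measurableSet_ball W ε))]
  calc _ = ∫⁻ b, ϑ (ball (W * b⁻¹) ε) ∂ρ :=
        lintegral_congr fun b => congrArg ϑ <| Set.ext fun a => by
          simp only [mem_preimage, ball, mem_ofPred_eq, D_mul_right]
    _ ≤ ∫⁻ _, c ∂ρ := lintegral_mono fun b => h _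
    _ = c := by simp

end Distance

section SegmentProduct
variable {M Ω : Type*} [Monoid M]

/-- `segProd X m t = X (m + t) * ⋯ * X (m + 1)`. -/
def segProd (X : ℕ → Ω → M) (m t : ℕ) : Ω → M :=
  ((List.range t).map fun i => X (m + t - i)).prod

theorem segProd_add (X : ℕ → Ω → M) (m t s : ℕ) :
    segProd X m (t + s) = segProd X (m + s) t * segProd X m s := by
  rw [segProd, List.range_add, List.map_append, List.prod_append, List.map_map]
  congr 2
  · exact List.map_congr_left fun i _ => by rw [Nat.add_comm t s, Nat.add_assoc]
  · exact List.map_congr_left fun i _ =>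
      congrArg X (show m + (t + s) - (t + i) = m + s - i by omega)

@[simp]
theorem segProd_one (X : ℕ → Ω → M) (m : ℕ) : segProd X m 1 = X (m + 1) := by
  simp [segProd]

theorem walk_eq_segProd {d : ℕ} (V : ℕ → Ω → UG d) (t : ℕ) : walk V t = segProd V 0 t := by
  funext ω
  simp only [walk, segProd, zero_add, Pi.list_prod_apply, List.map_map]
  rfl

variable [mM : MeasurableSpace M] [MeasurableMul₂ M] {X : ℕ → Ω → M}

theorem measurable_segProd_iSup (m t : ℕ) :
    Measurable[⨆ i ∈ Ioc m (m + t), mM.comap (X i)] (segProd X m t) := by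
  refine List.measurable_prod _ fun f hf => ?_
  obtain ⟨i, hi, rfl⟩ := List.mem_map.mp hf
  have hi := List.mem_range.mp hi
  exact Measurable.of_comap_le (le_iSup₂ (f := fun j (_ : j ∈ Ioc m (m + t)) => mM.comap (X j))
    (m + t - i) (by simp only [mem_Ioc]; omega))

variable [MeasurableSpace Ω]

theorem measurable_segProd (hX : ∀ i, Measurable (X i)) (m t : ℕ) :
    Measurable (segProd X m t) :=
  (measurable_segProd_iSup m t).mono (iSup₂_le fun i _ => (hX i).comap_le) le_rfl

theorem indepFun_segProd {P : Measure Ω} (hind : iIndepFun X P) (hX : ∀ i, Measurable (X i))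
    {m t m' t' : ℕ} (h : m + t ≤ m') : IndepFun (segProd X m' t') (segProd X m t) P := by
  rw [IndepFun_iff_Indep]
  refine indep_of_indep_of_le (indep_iSup_of_disjoint (fun i => (hX i).comap_le)
    hind.iIndep (S := Ioc m' (m' + t')) (T := Ioc m (m + t)) ?_)
    (measurable_segProd_iSup m' t').comap_le (measurable_segProd_iSup m t).comap_le
  exact Set.disjoint_left.mpr fun i hi hi' => by simp only [mem_Ioc] at hi hi'; omega

theorem map_segProd {P : Measure Ω} [IsProbabilityMeasure P] {ν : Measure M}
    (hind : iIndepFun X P) (hX : ∀ i, Measurable (X i)) (hlaw : ∀ i, P.map (X i) = ν)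
    (m t : ℕ) : P.map (segProd X m t) = convPow ν t := by
  induction t generalizing m with
  | zero => simp [segProd, convPow, Pi.one_def]
  | succ t ih =>
    rw [segProd_add X m t 1, (indepFun_segProd hind hX le_rfl).map_mul_eq_map_mconv_map
      (measurable_segProd hX _ _) (measurable_segProd hX _ _), ih, segProd_one, hlaw]
    rfl

end SegmentProduct

theorem measure_walk_preimage_ball_le {d : ℕ} {Ω : Type*} [MeasurableSpace Ω] {P : Measure Ω}
    [IsProbabilityMeasure P] {V : ℕ → Ω → UG d} {ν : Measure (UG d)}
    (hind : iIndepFun V P) (hV : ∀ i, Measurable (V i)) (hlaw : ∀ i, P.map (V i) = ν)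
    {τ : ℕ} {ε : ℝ} {c : ℝ≥0∞} (h : ∀ W, convPow ν τ (ball W ε) ≤ c) (k : ℕ) (W : UG d) :
    P (walk V (τ + k) ⁻¹' ball W ε) ≤ c := by
  have := Measure.isProbabilityMeasure_map (measurable_segProd hV 0 k).aemeasurable (μ := P)
  rw [walk_eq_segProd, segProd_add, zero_add, ← Measure.map_apply
      ((measurable_segProd hV k τ).mul (measurable_segProd hV 0 k)) (measurableSet_ball W ε),
    (indepFun_segProd hind hV (zero_add k).le).map_mul_eq_map_mconv_map
      (measurable_segProd hV k τ) (measurable_segProd hV 0 k)]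
  exact mconv_ball_le (fun V => map_segProd hind hV hlaw k τ ▸ h V) W

theorem measure_exists_mem_wordsLe_le {d : ℕ} {Ω : Type*} [MeasurableSpace Ω] (P : Measure Ω)
    {𝒢 : Finset (UG d)} (h𝒢 : 2 ≤ 𝒢.card) (r : ℕ) {E : UG d → Set Ω} {c : ℝ≥0∞}
    (hE : ∀ W, P (E W) ≤ c) :
    P {ω | ∃ W ∈ wordsLe 𝒢 r, ω ∈ E W} ≤ (𝒢.card : ℝ≥0∞) ^ (r + 1) * c := by
  have hsub : {ω | ∃ W ∈ wordsLe 𝒢 r, ω ∈ E W} ⊆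
      ⋃ n ∈ Finset.range (r + 1), ⋃ f : Fin n → 𝒢, E (List.ofFn fun i => (f i : UG d)).prod := by
    rintro ω ⟨_, ⟨l, hl, hl𝒢, rfl⟩, hω⟩
    simp only [mem_iUnion, Finset.mem_range]
    exact ⟨l.length, by omega, fun i => ⟨l.get i, hl𝒢 _ (l.get_mem i)⟩, by simpa using hω⟩
  calc P {ω | ∃ W ∈ wordsLe 𝒢 r, ω ∈ E W}
      ≤ ∑ n ∈ Finset.range (r + 1), ∑ f : Fin n → 𝒢, P (E (List.ofFn fun i => (f i : UG d)).prod) :=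
        (measure_mono hsub).trans <| (measure_biUnion_finset_le _ _).trans <|
          Finset.sum_le_sum fun n _ => measure_iUnion_fintype_le _ _
    _ ≤ ∑ n ∈ Finset.range (r + 1), ∑ f : Fin n → 𝒢, c := by gcongr; exact hE _
    _ = ((∑ n ∈ Finset.range (r + 1), 𝒢.card ^ n : ℕ) : ℝ≥0∞) * c := by
        simp [Finset.sum_mul]
    _ ≤ (𝒢.card : ℝ≥0∞) ^ (r + 1) * c := by
        gcongr
        exact_mod_cast (Nat.geomSum_lt h𝒢 fun n hn => Finset.mem_range.mp hn).le

end Paper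

namespace Paper
open ProbabilityTheory

theorem stmt15_general {d : ℕ} (μ ν : Measure (UG d))
    (𝒢 : Finset (UG d)) (h𝒢 : 2 ≤ 𝒢.card)
    {α β ε : ℝ}
    (τ : ℕ)
    (hequi : Equidistributed μ (convPow ν τ) α β ε)
    {Ω : Type*} [MeasurableSpace Ω] (P : Measure Ω) [IsProbabilityMeasure P]
    (V : ℕ → Ω → UG d) (hmeas : ∀ i, Measurable (V i))
    (hlaw : ∀ i, P.map (V i) = ν)
    (hindep : iIndepFun V P)
    (K : ℕ) (r : ℕ) :
    P {ω | ∃ k < K, ∃ W ∈ wordsLe 𝒢 r, D (walk V (τ + k) ω) W ≤ ε}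
      ≤ (K : ℝ≥0∞) * (𝒢.card : ℝ≥0∞) ^ (r + 1) * Vol μ (β * ε) := by
  calc P {ω | ∃ k < K, ∃ W ∈ wordsLe 𝒢 r, D (walk V (τ + k) ω) W ≤ ε}
      = P (⋃ k ∈ Finset.range K,
          {ω | ∃ W ∈ wordsLe 𝒢 r, ω ∈ walk V (τ + k) ⁻¹' ball W ε}) := by
        congr 1; ext ω; simp [ball]
    _ ≤ ∑ k ∈ Finset.range K, (𝒢.card : ℝ≥0∞) ^ (r + 1) * Vol μ (β * ε) :=
        (measure_biUnion_finset_le _ _).trans <| Finset.sum_le_sum fun k _ =>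
          measure_exists_mem_wordsLe_le P h𝒢 r <|
            measure_walk_preimage_ball_le hindep hmeas hlaw (fun W => (hequi W ε le_rfl).2) k
    _ = (K : ℝ≥0∞) * (𝒢.card : ℝ≥0∞) ^ (r + 1) * Vol μ (β * ε) := by
        rw [Finset.sum_const, Finset.card_range, nsmul_eq_mul, mul_assoc]

theorem stmt15 {d : ℕ} (hd : 2 ≤ d) (μ ν : Measure (UG d))
    [IsProbabilityMeasure μ] [μ.IsMulLeftInvariant] [IsProbabilityMeasure ν]
    (𝒢 : Finset (UG d)) (h𝒢 : 2 ≤ 𝒢.card)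
    {α β ε : ℝ} (hα0 : 0 < α) (hα1 : α ≤ 1) (hβ : 1 ≤ β) (hε : 0 < ε)
    (τ : ℕ) (hτ : 1 ≤ τ)
    (hequi : Equidistributed μ (convPow ν τ) α β ε)
    {Ω : Type*} [MeasurableSpace Ω] (P : Measure Ω) [IsProbabilityMeasure P]
    (V : ℕ → Ω → UG d) (hmeas : ∀ i, Measurable (V i))
    (hlaw : ∀ i, P.map (V i) = ν)
    (hindep : iIndepFun V P)
    (K : ℕ) (hK : 1 ≤ K) (r : ℕ) :
    P {ω | ∃ k < K, ∃ W ∈ wordsLe 𝒢 r, D (walk V (τ + k) ω) W ≤ ε}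
      ≤ (K : ℝ≥0∞) * (𝒢.card : ℝ≥0∞) ^ (r + 1) * Vol μ (β * ε) :=
  stmt15_general μ ν 𝒢 h𝒢 τ hequi P V hmeas hlaw hindep K r

end Paper
end
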